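/- With $\Gamma_k$ as above and $C = C_0/4$ (where $C_0$ is the constant for which $P(\Gamma_{n+1} - \Gamma_n > C_0 N^2 \mid \mathcal{F}_{\Gamma_n}) > 1/2$), there is a constant $c > 0$ such that for all $k \geq 1$, $P(\Gamma_k < C k N^2) \leq e^{-ck}$. In particular $\sum_{k=1}^\infty P(\Gamma_k < CkN^2) < \infty$, uniformly over all balanced environments. -/

import Mathlib

/-!
Put `g n := 3 - 2 · 1{Γ (n+1) - Γ n > p}` with `p = C₀ N²`. The hypothesis says
`E[g n | 𝓕_{Γ n}] < 2`, so by the tower property `E[∏_{n<k} g n] ≤ 2 ^ k`. If `Γ k < p k / 4`,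
fewer than `k / 4` increments can exceed `p` (they are nonnegative and sum to `Γ k`), so at
least `3k/4` factors of the product equal `3`. Markov's inequality then gives
`P(Γ k < p k / 4) ≤ 2 ^ k / 3 ^ (3k/4) = exp (-c k)` with `c = (3/4) log 3 - log 2 > 0`.
-/

open MeasureTheory Filter

section

open Finset

theorem card_filter_lt_mul_le_sum {ι : Type*} {s : Finset ι} {x : ι → ℝ}
    (hx : ∀ i ∈ s, 0 ≤ x i) (p : ℝ) : #{i ∈ s | p < x i} * p ≤ ∑ i ∈ s, x i :=
  calc #{i ∈ s | p < x i} * p ≤ ∑ i ∈ s with p < x i, x i := by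
        simpa using card_nsmul_le_sum _ x p fun i hi => (mem_filter.mp hi).2.le
    _ ≤ ∑ i ∈ s, x i := sum_le_sum_of_subset_of_nonneg (filter_subset _ _) fun i hi _ => hx i hi

theorem exp_le_prod_of_sum_lt {x : ℕ → ℝ} (hx : ∀ n, 0 ≤ x n) {p : ℝ} (hp : 0 ≤ p) {k : ℕ}
    (hsum : ∑ n ∈ range k, x n < p / 4 * k) :
    Real.exp (3 / 4 * k * Real.log 3) ≤ ∏ n ∈ range k, if p < x n then 1 else 3 := by
  have hlarge : (#{n ∈ range k | p < x n} : ℝ) < k / 4 := by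
    refine lt_of_mul_lt_mul_right ?_ hp
    linarith [card_filter_lt_mul_le_sum (s := range k) (fun n _ => hx n) p]
  have hcard : (#{n ∈ range k | p < x n} + #{n ∈ range k | ¬p < x n} : ℝ) = k := by
    exact_mod_cast (card_filter_add_card_filter_not (s := range k) (p < x ·)).trans (card_range k)
  rw [prod_ite, prod_const_one, one_mul, prod_const, ← Real.exp_log (pow_pos three_pos _),
    Real.log_pow, Real.exp_le_exp]
  exact mul_le_mul_of_nonneg_right (by linarith) (Real.log_nonneg (by norm_num))

variable {Ω : Type*} {m : MeasurableSpace Ω} {P : Measure Ω}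

theorem integrable_finset_prod_of_norm_le [IsFiniteMeasure P] {ι : Type*} (s : Finset ι)
    {g : ι → Ω → ℝ} {B : ℝ} (hmeas : ∀ i ∈ s, AEStronglyMeasurable (g i) P)
    (hbdd : ∀ i ω, ‖g i ω‖ ≤ B) : Integrable (fun ω => ∏ i ∈ s, g i ω) P :=
  .of_bound (s.aestronglyMeasurable_fun_prod hmeas) (B ^ #s) <| .of_forall fun ω => by
    rw [norm_prod]
    simpa using prod_le_prod (s := s) (fun i _ => norm_nonneg (g i ω)) fun i _ => hbdd i ω

theorem condExp_const_sub_const_mul_ae_eq [IsFiniteMeasure P] {m' : MeasurableSpace Ω}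
    (hm : m' ≤ m) {f : Ω → ℝ} (hf : Integrable f P) (a b : ℝ) :
    P[fun ω => a - b * f ω|m'] =ᵐ[P] fun ω => a - b * P[f|m'] ω := by
  have hsub : P[fun ω => a - b * f ω|m'] =ᵐ[P] P[fun _ => a|m'] - P[fun ω => b * f ω|m'] :=
    condExp_sub (integrable_const a) (hf.const_mul b) m'
  have hmul : P[fun ω => b * f ω|m'] =ᵐ[P] fun ω => b * P[f|m'] ω := condExp_smul b f m'
  filter_upwards [hsub, hmul] with ω h1 h2
  simp only [Pi.sub_apply] at h1
  rw [h1, condExp_const hm, h2]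

def stoppingTimeFiltration {ℱ : Filtration ℕ m} {τ : ℕ → Ω → WithTop ℕ}
    (hτ : ∀ k, IsStoppingTime ℱ (τ k)) (hmono : Monotone τ) : Filtration ℕ m where
  seq k := (hτ k).measurableSpace
  mono' _ _ hij := (hτ _).measurableSpace_mono (hτ _) (hmono hij)
  le' k := (hτ k).measurableSpace_le

theorem MeasureTheory.IsStoppingTime.measurable_natCast {ℱ : Filtration ℕ m} {T : Ω → ℕ}
    (hT : IsStoppingTime ℱ fun ω => (T ω : WithTop ℕ)) :
    Measurable[hT.measurableSpace] fun ω => (T ω : ℝ) :=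
  (measurable_of_countable fun t : WithTop ℕ => ((t.untopD 0 : ℕ) : ℝ)).comp hT.measurable

variable [IsProbabilityMeasure P]

theorem integral_prod_le_pow_of_condExp_le (𝒢 : Filtration ℕ m) {g : ℕ → Ω → ℝ} {a B : ℝ}
    (ha : 0 ≤ a) (hmeas : ∀ n, StronglyMeasurable[𝒢 (n + 1)] (g n))
    (hnonneg : ∀ n ω, 0 ≤ g n ω) (hbdd : ∀ n ω, ‖g n ω‖ ≤ B)
    (hcond : ∀ n, P[g n|𝒢 n] ≤ᵐ[P] fun _ => a) (k : ℕ) :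
    ∫ ω, ∏ n ∈ range k, g n ω ∂P ≤ a ^ k := by
  have hG_meas k : StronglyMeasurable[𝒢 k] fun ω => ∏ n ∈ range k, g n ω :=
    stronglyMeasurable_fun_prod _ fun n hn => (hmeas n).mono (𝒢.mono (mem_range.mp hn))
  have hG_int k : Integrable (fun ω => ∏ n ∈ range k, g n ω) P :=
    integrable_finset_prod_of_norm_le _
      (fun n _ => ((hmeas n).mono (𝒢.le _)).aestronglyMeasurable) hbdd
  have hg_int n : Integrable (g n) P :=
    .of_bound ((hmeas n).mono (𝒢.le _)).aestronglyMeasurable B (.of_forall (hbdd n))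
  induction k with
  | zero => simp
  | succ k ih =>
    set G := fun ω => ∏ n ∈ range k, g n ω
    have hsplit : (fun ω => ∏ n ∈ range (k + 1), g n ω) = G * g k := by
      ext ω; simp [G, prod_range_succ]
    have hpull : P[G * g k|𝒢 k] =ᵐ[P] G * P[g k|𝒢 k] :=
      condExp_mul_of_stronglyMeasurable_left (hG_meas k) (hsplit ▸ hG_int (k + 1)) (hg_int k)
    calc ∫ ω, ∏ n ∈ range (k + 1), g n ω ∂P = ∫ ω, (G * P[g k|𝒢 k]) ω ∂P := by
          rw [hsplit, ← integral_condExp (𝒢.le k)]; exact integral_congr_ae hpull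
      _ ≤ ∫ ω, a * G ω ∂P := by
          refine integral_mono_ae (integrable_condExp.congr hpull) ((hG_int k).const_mul a) ?_
          filter_upwards [hcond k] with ω hω
          simpa [mul_comm] using mul_le_mul_of_nonneg_left hω (prod_nonneg fun n _ => hnonneg n ω)
      _ ≤ a ^ (k + 1) := by
          rw [integral_const_mul, pow_succ']; exact mul_le_mul_of_nonneg_left ih ha

theorem measureReal_stoppingTime_lt_le_exp {ℱ : Filtration ℕ m} {Γ : ℕ → Ω → ℕ}
    (hstop : ∀ k, IsStoppingTime ℱ fun ω => (Γ k ω : WithTop ℕ)) (hmono : Monotone Γ)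
    (h0 : ∀ ω, Γ 0 ω = 0) {p : ℝ} (hp : 0 ≤ p)
    (hcond : ∀ k, ∀ᵐ ω ∂P, (1 : ℝ) / 2 <
      P[fun ω' => if p < (Γ (k + 1) ω' : ℝ) - Γ k ω' then (1 : ℝ) else 0|
        (hstop k).measurableSpace] ω)
    (k : ℕ) :
    P.real {ω | (Γ k ω : ℝ) < p / 4 * k} ≤ Real.exp (-(3 / 4 * Real.log 3 - Real.log 2) * k) := by
  let 𝒢 := stoppingTimeFiltration hstop fun _ _ hij ω => WithTop.coe_le_coe.mpr (hmono hij ω)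
  let Δ n ω : ℝ := (Γ (n + 1) ω : ℝ) - Γ n ω
  let I n ω : ℝ := if p < Δ n ω then 1 else 0
  let g n ω : ℝ := if p < Δ n ω then 1 else 3
  have hΔ_nonneg n ω : 0 ≤ Δ n ω := sub_nonneg.mpr (by exact_mod_cast hmono n.le_succ ω)
  have hΔ_meas n : Measurable[𝒢 (n + 1)] (Δ n) := (hstop (n + 1)).measurable_natCast.sub
    ((hstop n).measurable_natCast.mono (𝒢.mono n.le_succ) le_rfl)
  have hI_meas n : Measurable[𝒢 (n + 1)] (I n) :=
    Measurable.ite (hΔ_meas n measurableSet_Ioi) measurable_const measurable_const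
  have hg_meas n : StronglyMeasurable[𝒢 (n + 1)] (g n) :=
    (Measurable.ite (hΔ_meas n measurableSet_Ioi) measurable_const
      measurable_const).stronglyMeasurable
  have hg_nonneg n ω : 0 ≤ g n ω := by simp only [g]; split_ifs <;> norm_num
  have hg_bdd n ω : ‖g n ω‖ ≤ 3 := by simp only [g]; split_ifs <;> norm_num
  have hg_cond n : P[g n|𝒢 n] ≤ᵐ[P] fun _ => 2 := by
    have hg : g n = fun ω => 3 - 2 * I n ω := by
      ext ω; simp only [g, I]; split_ifs <;> norm_num
    have hI_int : Integrable (I n) P :=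
      .of_bound ((hI_meas n).mono (𝒢.le _) le_rfl).aestronglyMeasurable 1
        (.of_forall fun ω => by simp only [I]; split_ifs <;> norm_num)
    filter_upwards [condExp_const_sub_const_mul_ae_eq (𝒢.le n) hI_int 3 2, hcond n]
      with ω hω hI
    rw [hg, hω]
    change 1 / 2 < P[I n|𝒢 n] ω at hI
    linarith
  have hlower : {ω | (Γ k ω : ℝ) < p / 4 * k} ⊆
      {ω | Real.exp (3 / 4 * k * Real.log 3) ≤ ∏ n ∈ range k, g n ω} := fun ω hω =>
    exp_le_prod_of_sum_lt (hΔ_nonneg · ω) hp <| by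
      rwa [sum_range_sub (fun n => (Γ n ω : ℝ)), h0, Nat.cast_zero, sub_zero]
  have hG_int := integrable_finset_prod_of_norm_le (P := P) (range k)
    (fun n _ => ((hg_meas n).mono (𝒢.le _)).aestronglyMeasurable) hg_bdd
  calc P.real {ω | (Γ k ω : ℝ) < p / 4 * k}
      ≤ P.real {ω | Real.exp (3 / 4 * k * Real.log 3) ≤ ∏ n ∈ range k, g n ω} :=
        measureReal_mono hlower
    _ ≤ (∫ ω, ∏ n ∈ range k, g n ω ∂P) / Real.exp (3 / 4 * k * Real.log 3) := by
        rw [le_div_iff₀' (Real.exp_pos _)]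
        exact mul_meas_ge_le_integral_of_nonneg
          (.of_forall fun ω => prod_nonneg fun n _ => hg_nonneg n ω) hG_int _
    _ ≤ 2 ^ k / Real.exp (3 / 4 * k * Real.log 3) := by
        gcongr
        exact integral_prod_le_pow_of_condExp_le 𝒢 zero_le_two hg_meas hg_nonneg hg_bdd hg_cond k
    _ = Real.exp (-(3 / 4 * Real.log 3 - Real.log 2) * k) := by
        rw [← Real.exp_log (pow_pos two_pos k), Real.log_pow, ← Real.exp_sub]
        ring_nf

end

/-- with `Γ_k` the successive exit times as above and `C = C₀/4`,
`P(Γ_k < C k N²)` decays exponentially in `k`, uniformly over all balanced environments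
(i.e. the constant `c` depends only on `C₀`, not on the probability space or the process). -/
theorem stmt6 (C₀ : ℝ) (hC₀ : 0 < C₀) : ∃ c : ℝ, 0 < c ∧
    ∀ (Ω : Type) (m : MeasurableSpace Ω) (P : Measure Ω) (_ : IsProbabilityMeasure P)
      (ℱ : Filtration ℕ m) (N : ℕ) (Γ : ℕ → Ω → ℕ) (hstop : ∀ k, IsStoppingTime ℱ (fun ω => (Γ k ω : WithTop ℕ))),
      (∀ ω, Γ 0 ω = 0) →
      (∀ k ω, Γ k ω < Γ (k + 1) ω) →
      -- each increment exceeds C₀ N² with conditional probability more than 1/2: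
      (∀ k, ∀ᵐ ω ∂P,
        (1 : ℝ) / 2 <
          (P[(fun ω' => if C₀ * (N : ℝ) ^ 2 < ((Γ (k + 1) ω' : ℝ) - (Γ k ω' : ℝ))
              then (1 : ℝ) else 0)|(hstop k).measurableSpace]) ω) →
      (∀ k : ℕ, 1 ≤ k →
        (P {ω | (Γ k ω : ℝ) < (C₀ / 4) * k * (N : ℝ) ^ 2}).toReal ≤ Real.exp (-c * k)) ∧
      ∃ M : ℝ, ∀ n : ℕ,
        ∑ k ∈ Finset.Icc 1 n,
          (P {ω | (Γ k ω : ℝ) < (C₀ / 4) * k * (N : ℝ) ^ 2}).toReal ≤ M := by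
  have hc : 0 < 3 / 4 * Real.log 3 - Real.log 2 := by
    have := Real.log_lt_log (by norm_num) (show (2 : ℝ) ^ 4 < 3 ^ 3 by norm_num)
    rw [Real.log_pow, Real.log_pow] at this
    push_cast at this
    linarith
  refine ⟨_, hc, fun Ω m P _ ℱ N Γ hstop h0 hmono hcond => ?_⟩
  have htail k : (P {ω | (Γ k ω : ℝ) < C₀ / 4 * k * (N : ℝ) ^ 2}).toReal ≤
      Real.exp (-(3 / 4 * Real.log 3 - Real.log 2) * k) := by
    rw [← measureReal_def]
    convert measureReal_stoppingTime_lt_le_exp hstop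
      (monotone_nat_of_le_succ fun k ω => (hmono k ω).le) h0 (by positivity) hcond k using 5
    ring
  have hsummable : Summable fun k : ℕ => Real.exp (-(3 / 4 * Real.log 3 - Real.log 2) * k) := by
    simpa only [mul_comm] using Real.summable_exp_nat_mul_iff.mpr (neg_lt_zero.mpr hc)
  refine ⟨fun k _ => htail k, ∑' k : ℕ, Real.exp (-(3 / 4 * Real.log 3 - Real.log 2) * k),
    fun n => ?_⟩
  exact (Finset.sum_le_sum fun k _ => htail k).trans
    (hsummable.sum_le_tsum _ fun k _ => (Real.exp_pos _).le)
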